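/- arXiv:2212.10519 — 2 statements merged into one kernel-verified Lean document; each statement's English description precedes it below -/
import Mathlib

section
/- Let Γ ⊆ ℂ be a nonempty set, let F : ℂ → ℂ, let z₀, …, z_N ∈ Γ be distinct, and let Λ ≥ 0 be a constant such that for every complex polynomial Q of degree at most N, sup_{z∈Γ} |Q(z)| ≤ Λ · max_{0≤j≤N} |Q(z_j)| (the Lebesgue constant property for the nodes {z_j} on Γ). Let V be the (N+1)×(N+1) Vandermonde matrix with entries V_{jk} = z_j^k, let f = (F(z₀), …, F(z_N))ᵀ, let a solve V a = f, and set P_N(z) = Σ_{k=0}^N a_k z^k. Suppose â satisfies (V + δV) â = f for some matrix δV with ‖δV‖₂ ≤ u·γ for constants u, γ > 0, and that ‖V⁻¹‖₂ ≤ 1/(2 u γ); set P̂_N(z) = Σ_{k=0}^N â_k z^k. If sup_{z∈Γ} |F(z) − P_N(z)| ≤ ε for a constant ε ≥ 0, then for every z ∈ Γ, |F(z) − P̂_N(z)| ≤ ε + 2·u·γ·Λ·‖a‖₂. -/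
/-!
Subtracting the two systems gives `V (a - â) = δV â`, so `a - â = V⁻¹ δV â` has norm at most
`‖â‖ / 2`, whence `‖â‖ ≤ 2 ‖a‖` and the residual `δV â` has norm at most `2 u γ ‖a‖`.
The polynomial `P_N - P̂_N` has coefficient vector `a - â`, so its values at the nodes are the
entries of `V (a - â) = δV â`; the Lebesgue constant transfers this bound from the nodes to all
of `Γ`, and the triangle inequality with `|F - P_N| ≤ ε` finishes.
-/

open Finset Matrix Polynomial

namespace Polynomial

variable {R : Type*} [Semiring R] [DecidableEq R]

theorem eval_ofFn {n : ℕ} (v : Fin n → R) (x : R) :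
    (ofFn n v).eval x = ∑ i, v i * x ^ (i : ℕ) := by
  simp only [ofFn_eq_sum_monomial, eval_finsetSum, eval_monomial]

theorem natDegree_ofFn_le {n : ℕ} (v : Fin (n + 1) → R) : (ofFn (n + 1) v).natDegree ≤ n :=
  Nat.le_of_lt_succ (ofFn_natDegree_lt n.succ_pos v)

end Polynomial

namespace Matrix

theorem vandermonde_mulVec_apply {R : Type*} [CommRing R] [DecidableEq R] {n : ℕ}
    (z v : Fin n → R) (j : Fin n) : (vandermonde z *ᵥ v) j = (ofFn n v).eval (z j) := by
  simp only [eval_ofFn, mulVec, dotProduct, vandermonde_apply, mul_comm]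

variable {n R : Type*} [Fintype n] [CommRing R]

theorem mulVec_sub_eq_of_add_mulVec_eq {V δV : Matrix n n R} {f a b : n → R}
    (ha : V *ᵥ a = f) (hb : (V + δV) *ᵥ b = f) : V *ᵥ (a - b) = δV *ᵥ b := by
  rw [mulVec_sub, ha, ← hb, add_mulVec, add_sub_cancel_left]

theorem eq_inv_mulVec_of_mulVec_eq [DecidableEq n] {V : Matrix n n R} (hV : IsUnit V.det)
    {x y : n → R} (h : V *ᵥ x = y) : x = V⁻¹ *ᵥ y := by
  rw [← h, mulVec_mulVec, nonsing_inv_mul V hV, one_mulVec]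

end Matrix

theorem norm_le_two_mul_of_sub_eq {𝕜 E : Type*} [NontriviallyNormedField 𝕜]
    [SeminormedAddCommGroup E] [NormedSpace 𝕜 E] {T S : E →L[𝕜] E} (hTS : ‖T‖ * ‖S‖ ≤ 1 / 2)
    {a b : E} (h : a - b = T (S b)) : ‖b‖ ≤ 2 * ‖a‖ := by
  have hdiff : ‖a - b‖ ≤ ‖b‖ / 2 :=
    calc ‖a - b‖ ≤ ‖T‖ * ‖S‖ * ‖b‖ := by
          rw [h, mul_assoc]
          exact T.le_opNorm_of_le (S.le_opNorm b)
      _ ≤ 1 / 2 * ‖b‖ := by gcongr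
      _ = ‖b‖ / 2 := by ring
  linarith [norm_sub_norm_le b a, norm_sub_rev a b]

theorem mul_le_one_half_of_le_of_le_one_div {x y c : ℝ} (hx : 0 ≤ x) (hxc : x ≤ c)
    (hyc : y ≤ 1 / (2 * c)) : y * x ≤ 1 / 2 := by
  rcases hx.eq_or_lt with rfl | hpos
  · simp
  have hc : 0 < c := hpos.trans_le hxc
  calc y * x ≤ 1 / (2 * c) * c := mul_le_mul hyc hxc hx (by positivity)
    _ = 1 / 2 := by field_simp

open Finset in
theorem stmt_3_general (N : ℕ) (Γ : Set ℂ) (F : ℂ → ℂ)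
    (z : Fin (N + 1) → ℂ) (hzinj : Function.Injective z)
    (Λ : ℝ) (hΛ : 0 ≤ Λ)
    (hLeb : ∀ Q : Polynomial ℂ, Q.natDegree ≤ N → ∀ w ∈ Γ,
      ‖Q.eval w‖ ≤ Λ * (univ.sup' univ_nonempty fun j => ‖Q.eval (z j)‖))
    (V δV : Matrix (Fin (N + 1)) (Fin (N + 1)) ℂ)
    (hV : V = Matrix.of fun j k : Fin (N + 1) => z j ^ (k : ℕ))
    (f a ahat : EuclideanSpace ℂ (Fin (N + 1)))
    (ha : V.mulVec a = f)
    (u γ : ℝ)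
    (hahat : (V + δV).mulVec ahat = f)
    (hδV : ‖Matrix.toEuclideanCLM (𝕜 := ℂ) δV‖ ≤ u * γ)
    (hVinv : ‖Matrix.toEuclideanCLM (𝕜 := ℂ) V⁻¹‖ ≤ 1 / (2 * u * γ))
    (ε : ℝ)
    (herr : ∀ w ∈ Γ, ‖F w - ∑ k, a k * w ^ (k : ℕ)‖ ≤ ε) :
    ∀ w ∈ Γ, ‖F w - ∑ k, ahat k * w ^ (k : ℕ)‖ ≤ ε + 2 * u * γ * Λ * ‖a‖ := by
  intro w hw
  change V = vandermonde z at hV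
  subst hV
  set S := toEuclideanCLM (𝕜 := ℂ) δV
  have hres := mulVec_sub_eq_of_add_mulVec_eq ha hahat
  have hdiff : a - ahat = toEuclideanCLM (𝕜 := ℂ) (vandermonde z)⁻¹ (S ahat) :=
    WithLp.ofLp_injective 2 <| eq_inv_mulVec_of_mulVec_eq
      (det_vandermonde_ne_zero_iff.mpr hzinj).isUnit hres
  have hahat_le : ‖ahat‖ ≤ 2 * ‖a‖ := norm_le_two_mul_of_sub_eq
    (mul_le_one_half_of_le_of_le_one_div (norm_nonneg S) hδV (by rwa [← mul_assoc])) hdiff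
  have hres_le : ‖S ahat‖ ≤ 2 * u * γ * ‖a‖ :=
    calc ‖S ahat‖ ≤ ‖S‖ * ‖ahat‖ := S.le_opNorm ahat
      _ ≤ u * γ * (2 * ‖a‖) := by gcongr; exact (norm_nonneg S).trans hδV
      _ = 2 * u * γ * ‖a‖ := by ring
  set Q := ofFn (N + 1) (⇑a - ⇑ahat)
  have hnodes : ∀ j, ‖Q.eval (z j)‖ ≤ 2 * u * γ * ‖a‖ := fun j => by
    rw [← vandermonde_mulVec_apply, hres]
    exact (PiLp.norm_apply_le (S ahat) j).trans hres_le
  have hQw : ‖Q.eval w‖ ≤ Λ * (2 * u * γ * ‖a‖) :=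
    (hLeb Q (natDegree_ofFn_le _) w hw).trans
      (mul_le_mul_of_nonneg_left (sup'_le _ _ fun j _ => hnodes j) hΛ)
  have hsplit :
      F w - ∑ k, ahat k * w ^ (k : ℕ) = (F w - ∑ k, a k * w ^ (k : ℕ)) + Q.eval w := by
    simp only [Q, eval_ofFn, Pi.sub_apply, sub_mul, sum_sub_distrib]
    ring
  calc ‖F w - ∑ k, ahat k * w ^ (k : ℕ)‖
      ≤ ‖F w - ∑ k, a k * w ^ (k : ℕ)‖ + ‖Q.eval w‖ := hsplit ▸ norm_add_le _ _
    _ ≤ ε + 2 * u * γ * Λ * ‖a‖ := by linarith [herr w hw]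

open Finset in
/-- A priori bound for interpolation in the monomial basis: under the
Lebesgue-constant hypothesis, if `(V + δV) â = f` with `‖δV‖₂ ≤ u γ`,
`‖V⁻¹‖₂ ≤ 1/(2uγ)`, and `sup_Γ |F - P_N| ≤ ε`, then
`|F(z) - P̂_N(z)| ≤ ε + 2 u γ Λ ‖a‖₂` on `Γ`. -/
theorem stmt_3 (N : ℕ) (Γ : Set ℂ) (hΓ : Γ.Nonempty) (F : ℂ → ℂ)
    (z : Fin (N + 1) → ℂ) (hz : ∀ j, z j ∈ Γ) (hzinj : Function.Injective z)
    (Λ : ℝ) (hΛ : 0 ≤ Λ)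
    (hLeb : ∀ Q : Polynomial ℂ, Q.natDegree ≤ N → ∀ w ∈ Γ,
      ‖Q.eval w‖ ≤ Λ * (univ.sup' univ_nonempty fun j => ‖Q.eval (z j)‖))
    (V δV : Matrix (Fin (N + 1)) (Fin (N + 1)) ℂ)
    (hV : V = Matrix.of fun j k : Fin (N + 1) => z j ^ (k : ℕ))
    (f a ahat : EuclideanSpace ℂ (Fin (N + 1)))
    (hf : ∀ j, f j = F (z j))
    (ha : V.mulVec a = f)
    (u γ : ℝ) (hu : 0 < u) (hγ : 0 < γ)
    (hahat : (V + δV).mulVec ahat = f)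
    (hδV : ‖Matrix.toEuclideanCLM (𝕜 := ℂ) δV‖ ≤ u * γ)
    (hVinv : ‖Matrix.toEuclideanCLM (𝕜 := ℂ) V⁻¹‖ ≤ 1 / (2 * u * γ))
    (ε : ℝ) (hε : 0 ≤ ε)
    (herr : ∀ w ∈ Γ, ‖F w - ∑ k, a k * w ^ (k : ℕ)‖ ≤ ε) :
    ∀ w ∈ Γ, ‖F w - ∑ k, ahat k * w ^ (k : ℕ)‖ ≤ ε + 2 * u * γ * Λ * ‖a‖ :=
  stmt_3_general N Γ F z hzinj Λ hΛ hLeb V δV hV f a ahat ha u γ hahat hδV hVinv ε herr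
end

section
/- Let Γ ⊆ ℂ be a nonempty set, let F : ℂ → ℂ, let N be a positive integer, and let ρ > 1, ρ_* > 1, C ≥ 0 be constants. Suppose (i) for every n ≤ N and every complex polynomial Q(z) = Σ_{k=0}^n b_k z^k of degree at most n, (Σ_{k=0}^n |b_k|²)^{1/2} ≤ ρ_*^n · sup_{z∈Γ} |Q(z)|; and (ii) Q₀, Q₁, …, Q_N are polynomials with deg Q_n ≤ n and sup_{z∈Γ} |F(z) − Q_n(z)| ≤ C·ρ^{−n} for all 0 ≤ n ≤ N. Then the coefficient vector b of Q_N satisfies ‖b‖₂ ≤ ( sup_{z∈Γ} |F(z)| + C ) + 2·C·ρ_*·Σ_{j=0}^{N−1} (ρ_*/ρ)^j. -/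
/-!
Write `Q_N = Q_0 + ∑_{j<N} (Q_{j+1} - Q_j)` and apply the coefficient bound (i) to each piece.
`Q_0` is constant, so `F` is bounded on `Γ` and `sup_Γ |Q_0| ≤ sup_Γ |F| + C`; the difference
`Q_{j+1} - Q_j` has degree at most `j + 1` and `sup_Γ |Q_{j+1} - Q_j| ≤ 2 C ρ^{-j}`, so its
coefficient vector has norm at most `ρ_*^{j+1} · 2 C ρ^{-j} = 2 C ρ_* (ρ_*/ρ)^j`.
-/

open Polynomial Finset

section CoeffVec

variable {𝕜 : Type*} [RCLike 𝕜]

noncomputable def coeffVec (n : ℕ) : 𝕜[X] →ₗ[𝕜] EuclideanSpace 𝕜 (Fin (n + 1)) :=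
  (WithLp.linearEquiv 2 𝕜 (Fin (n + 1) → 𝕜)).symm.toLinearMap ∘ₗ
    LinearMap.pi fun k => lcoeff 𝕜 k

lemma norm_coeffVec (n : ℕ) (P : 𝕜[X]) :
    ‖coeffVec n P‖ = √(∑ k ∈ range (n + 1), ‖P.coeff k‖ ^ 2) := by
  rw [EuclideanSpace.norm_eq, ← Fin.sum_univ_eq_sum_range (fun k => ‖P.coeff k‖ ^ 2)]
  rfl

lemma sum_range_norm_coeff_sq_of_natDegree_le {m n : ℕ} (hmn : m ≤ n) {P : 𝕜[X]}
    (hP : P.natDegree ≤ m) :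
    ∑ k ∈ range (n + 1), ‖P.coeff k‖ ^ 2 = ∑ k ∈ range (m + 1), ‖P.coeff k‖ ^ 2 := by
  refine (sum_subset (range_subset_range.2 (by omega)) fun k hkn hkm => ?_).symm
  rw [coeff_eq_zero_of_natDegree_lt (by simp at hkm; omega), norm_zero, sq, zero_mul]

end CoeffVec

lemma bddAbove_norm_image_of_norm_sub_le {α E : Type*} [SeminormedAddGroup E] {s : Set α}
    {f : α → E} (c : E) {C : ℝ} (h : ∀ x ∈ s, ‖f x - c‖ ≤ C) :
    BddAbove ((fun x => ‖f x‖) '' s) :=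
  ⟨C + ‖c‖, Set.forall_mem_image.2 fun x hx =>
    (norm_le_norm_sub_add (f x) c).trans (by linarith [h x hx])⟩

lemma norm_le_sSup_norm_image_add {α E : Type*} [SeminormedAddGroup E] {s : Set α}
    {f g : α → E} {C : ℝ} (hf : BddAbove ((fun x => ‖f x‖) '' s))
    (h : ∀ x ∈ s, ‖f x - g x‖ ≤ C) {x : α} (hx : x ∈ s) :
    ‖g x‖ ≤ sSup ((fun x => ‖f x‖) '' s) + C := by
  have hfx : ‖f x‖ ≤ sSup ((fun x => ‖f x‖) '' s) := le_csSup hf ⟨x, hx, rfl⟩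
  have := norm_le_insert' (g x) (f x)
  rw [norm_sub_rev] at this
  linarith [h x hx]

lemma norm_le_norm_add_sum_range_dist {E : Type*} [SeminormedAddCommGroup E] (f : ℕ → E) (n : ℕ) :
    ‖f n‖ ≤ ‖f 0‖ + ∑ i ∈ range n, dist (f i) (f (i + 1)) := by
  refine (norm_le_insert' (f n) (f 0)).trans (add_le_add_right ?_ _)
  rw [← dist_eq_norm, dist_comm]
  exact dist_le_range_sum_dist f n

lemma norm_sub_le_of_norm_sub_le_pow_inv {E : Type*} [SeminormedAddCommGroup E] {f a b : E}
    {C ρ : ℝ} {j : ℕ} (hρ : 1 ≤ ρ) (hC : 0 ≤ C) (ha : ‖f - a‖ ≤ C * (ρ ^ j)⁻¹)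
    (hb : ‖f - b‖ ≤ C * (ρ ^ (j + 1))⁻¹) :
    ‖a - b‖ ≤ 2 * C * (ρ ^ j)⁻¹ := by
  have hρj : (ρ ^ (j + 1))⁻¹ ≤ (ρ ^ j)⁻¹ :=
    inv_anti₀ (by positivity) (pow_le_pow_right₀ hρ j.le_succ)
  calc ‖a - b‖ ≤ ‖f - a‖ + ‖f - b‖ := by
        simpa only [← dist_eq_norm] using dist_triangle_left a b f
    _ ≤ 2 * C * (ρ ^ j)⁻¹ := by nlinarith

def CoeffNormBound (Γ : Set ℂ) (ρs : ℝ) (N : ℕ) : Prop :=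
  ∀ n ≤ N, ∀ Q : ℂ[X], Q.natDegree ≤ n →
    √(∑ k ∈ range (n + 1), ‖Q.coeff k‖ ^ 2) ≤ ρs ^ n * sSup ((fun w => ‖Q.eval w‖) '' Γ)

lemma norm_coeffVec_le_of_forall_norm_eval_le {Γ : Set ℂ} {ρs : ℝ} {N : ℕ} (hρs : 0 ≤ ρs)
    (hcoeff : CoeffNormBound Γ ρs N) {m : ℕ} (hm : m ≤ N) {P : ℂ[X]} (hP : P.natDegree ≤ m)
    {B : ℝ} (hB : 0 ≤ B) (hPB : ∀ w ∈ Γ, ‖P.eval w‖ ≤ B) :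
    ‖coeffVec N P‖ ≤ ρs ^ m * B := by
  rw [norm_coeffVec, sum_range_norm_coeff_sq_of_natDegree_le hm hP]
  exact (hcoeff m hm P hP).trans <| mul_le_mul_of_nonneg_left
    (Real.sSup_le (Set.forall_mem_image.2 hPB) hB) (pow_nonneg hρs m)

section Approximants

variable {Γ : Set ℂ} {F : ℂ → ℂ} {ρ ρs C : ℝ} {N : ℕ} {Q : ℕ → ℂ[X]}

lemma norm_coeffVec_le_of_natDegree_le_zero (hρs : 0 ≤ ρs) (hC : 0 ≤ C)
    (hcoeff : CoeffNormBound Γ ρs N) {P : ℂ[X]} (hP : P.natDegree ≤ 0)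
    (hPerr : ∀ w ∈ Γ, ‖F w - P.eval w‖ ≤ C) :
    ‖coeffVec N P‖ ≤ sSup ((fun w => ‖F w‖) '' Γ) + C := by
  have hFbdd : BddAbove ((fun w => ‖F w‖) '' Γ) :=
    bddAbove_norm_image_of_norm_sub_le (P.coeff 0) fun w hw => by
      have h := hPerr w hw
      rwa [eq_C_of_natDegree_le_zero hP, eval_C] at h
  have hM : 0 ≤ sSup ((fun w => ‖F w‖) '' Γ) :=
    Real.sSup_nonneg (Set.forall_mem_image.2 fun _ _ => norm_nonneg _)
  simpa using norm_coeffVec_le_of_forall_norm_eval_le hρs hcoeff (Nat.zero_le N) hP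
    (by positivity) fun _ => norm_le_sSup_norm_image_add hFbdd hPerr

lemma dist_coeffVec_succ_le (hρ : 1 ≤ ρ) (hρs : 0 ≤ ρs) (hC : 0 ≤ C)
    (hcoeff : CoeffNormBound Γ ρs N) (hQdeg : ∀ n ≤ N, (Q n).natDegree ≤ n)
    (hQerr : ∀ n ≤ N, ∀ w ∈ Γ, ‖F w - (Q n).eval w‖ ≤ C * (ρ ^ n)⁻¹) {j : ℕ} (hj : j + 1 ≤ N) :
    dist (coeffVec N (Q j)) (coeffVec N (Q (j + 1))) ≤ 2 * C * ρs * (ρs / ρ) ^ j := by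
  have hdeg : (Q j - Q (j + 1)).natDegree ≤ j + 1 :=
    (natDegree_sub_le _ _).trans (max_le ((hQdeg j (by omega)).trans j.le_succ) (hQdeg _ hj))
  have hsup (w) (hw : w ∈ Γ) : ‖(Q j - Q (j + 1)).eval w‖ ≤ 2 * C * (ρ ^ j)⁻¹ := by
    rw [eval_sub]
    exact norm_sub_le_of_norm_sub_le_pow_inv hρ hC (hQerr j (by omega) w hw) (hQerr _ hj w hw)
  calc dist (coeffVec N (Q j)) (coeffVec N (Q (j + 1)))
      = ‖coeffVec N (Q j - Q (j + 1))‖ := by rw [map_sub, dist_eq_norm]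
    _ ≤ ρs ^ (j + 1) * (2 * C * (ρ ^ j)⁻¹) :=
      norm_coeffVec_le_of_forall_norm_eval_le hρs hcoeff hj hdeg (by positivity) hsup
    _ = 2 * C * ρs * (ρs / ρ) ^ j := by rw [div_pow, pow_succ]; ring

end Approximants

theorem stmt_10_general (N : ℕ) (Γ : Set ℂ) (F : ℂ → ℂ)
    (ρ ρs C : ℝ) (hρ : 1 < ρ) (hρs : 1 < ρs) (hC : 0 ≤ C)
    (hcoeff : ∀ n ≤ N, ∀ Q : Polynomial ℂ, Q.natDegree ≤ n →
      Real.sqrt (∑ k ∈ Finset.range (n + 1), ‖Q.coeff k‖ ^ 2) ≤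
        ρs ^ n * sSup ((fun w => ‖Q.eval w‖) '' Γ))
    (Q : ℕ → Polynomial ℂ)
    (hQdeg : ∀ n ≤ N, (Q n).natDegree ≤ n)
    (hQerr : ∀ n ≤ N, ∀ w ∈ Γ, ‖F w - (Q n).eval w‖ ≤ C * (ρ ^ n)⁻¹) :
    Real.sqrt (∑ k ∈ Finset.range (N + 1), ‖(Q N).coeff k‖ ^ 2) ≤
      (sSup ((fun w => ‖F w‖) '' Γ) + C) +
        2 * C * ρs * ∑ j ∈ Finset.range N, (ρs / ρ) ^ j := by
  have hρs0 : 0 ≤ ρs := by linarith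
  have hQ0 := norm_coeffVec_le_of_natDegree_le_zero hρs0 hC hcoeff (hQdeg 0 (Nat.zero_le N))
    fun w hw => by simpa using hQerr 0 (Nat.zero_le N) w hw
  have hstep (j) (hj : j ∈ range N) :=
    dist_coeffVec_succ_le hρ.le hρs0 hC hcoeff hQdeg hQerr (mem_range.1 hj)
  rw [← norm_coeffVec, mul_sum]
  exact (norm_le_norm_add_sum_range_dist (fun i => coeffVec N (Q i)) N).trans
    (add_le_add hQ0 (sum_le_sum hstep))

/-- Bound for the Euclidean norm of the coefficient vector of the last member
`Q_N` of a sequence of near-best polynomial approximations to `F` with errors `C ρ^{-n}`,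
given a coefficient-norm bound with parameter `ρ_*`. -/
theorem stmt_10 (N : ℕ) (hN : 0 < N) (Γ : Set ℂ) (hΓ : Γ.Nonempty) (F : ℂ → ℂ)
    (ρ ρs C : ℝ) (hρ : 1 < ρ) (hρs : 1 < ρs) (hC : 0 ≤ C)
    (hcoeff : ∀ n ≤ N, ∀ Q : Polynomial ℂ, Q.natDegree ≤ n →
      Real.sqrt (∑ k ∈ Finset.range (n + 1), ‖Q.coeff k‖ ^ 2) ≤
        ρs ^ n * sSup ((fun w => ‖Q.eval w‖) '' Γ))
    (Q : ℕ → Polynomial ℂ)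
    (hQdeg : ∀ n ≤ N, (Q n).natDegree ≤ n)
    (hQerr : ∀ n ≤ N, ∀ w ∈ Γ, ‖F w - (Q n).eval w‖ ≤ C * (ρ ^ n)⁻¹) :
    Real.sqrt (∑ k ∈ Finset.range (N + 1), ‖(Q N).coeff k‖ ^ 2) ≤
      (sSup ((fun w => ‖F w‖) '' Γ) + C) +
        2 * C * ρs * ∑ j ∈ Finset.range N, (ρs / ρ) ^ j :=
  stmt_10_general N Γ F ρ ρs C hρ hρs hC hcoeff Q hQdeg hQerr
end
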